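/- arXiv:1405.1223 — 2 statements merged into one kernel-verified Lean document; each statement's English description precedes it below -/
import Mathlib

section
/- Let C be a convex body in the plane containing the rectangle R = [−a,a] × [−b,b], with diameter at most d, and let K be an ε-kernel of C with a, b ≥ dε. Then K contains the axis-parallel rectangle S = [−a+dε, a−dε] × [−b+dε, b−dε]. -/
/-!
If `p ∉ K`, separate `p` from the convex kernel `K` by a unit vector `u`, so that
`sup_K ⟪·, u⟫ < ⟪p, u⟫`. Since `p` lies at depth `dε` inside the rectangle, moving it by `dε` in
each coordinate towards the signs of `u` stays inside `C` and raises `⟪·, u⟫` by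
`dε (|u₀| + |u₁|) ≥ dε`. Hence `width u K < width u C - dε ≤ (1 - ε) width u C`, because
`width u C ≤ diam C ≤ d`; this contradicts the kernel property.
-/

open scoped RealInnerProductSpace
noncomputable section

abbrev V : Type := EuclideanSpace ℝ (Fin 2)

/-- Directional width of a set in direction `u`. -/
def width (u : V) (C : Set V) : ℝ :=
  sSup ((fun p => ⟪p, u⟫) '' C) - sInf ((fun p => ⟪p, u⟫) '' C)

/-- A convex body in the plane. -/
def IsConvexBody (C : Set V) : Prop :=
  IsCompact C ∧ Convex ℝ C ∧ (interior C).Nonempty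

/-- `K` is an `ε`-kernel of `C`. -/
def IsKernel (ε : ℝ) (K C : Set V) : Prop :=
  K ⊆ C ∧ IsCompact K ∧ Convex ℝ K ∧
    ∀ u : V, ‖u‖ = 1 → (1 - ε) * width u C ≤ width u K

/-- The parallelogram with vertices `x, x+u, x+v, x+u+v`. -/
def Q (x u v : V) : Set V := convexHull ℝ {x, x + u, x + v, x + u + v}

/-- The axis-parallel rectangle `[-a,a] × [-b,b]`. -/
def rect (a b : ℝ) : Set V := {p | |p 0| ≤ a ∧ |p 1| ≤ b}

open Set

theorem exists_unit_inner_lt_of_notMem {E : Type*} [NormedAddCommGroup E]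
    [InnerProductSpace ℝ E] [CompleteSpace E] {K : Set E} {p : E} (hconv : Convex ℝ K)
    (hclosed : IsClosed K) (hne : K.Nonempty) (hp : p ∉ K) :
    ∃ u : E, ‖u‖ = 1 ∧ ∀ k ∈ K, ⟪k, u⟫ < ⟪p, u⟫ := by
  obtain ⟨f, t, hfK, htp⟩ := geometric_hahn_banach_closed_point hconv hclosed hp
  set v : E := (InnerProductSpace.toDual ℝ E).symm f
  have hv : ∀ x, ⟪x, v⟫ = f x := fun x => by
    rw [real_inner_comm]; exact InnerProductSpace.toDual_symm_apply
  have hv0 : v ≠ 0 := by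
    rintro h
    obtain ⟨k, hk⟩ := hne
    have := (hfK k hk).trans htp
    rw [← hv, ← hv, h, inner_zero_right, inner_zero_right] at this
    exact lt_irrefl _ this
  refine ⟨‖v‖⁻¹ • v, norm_smul_inv_norm hv0, fun k hk => ?_⟩
  rw [real_inner_smul_right, real_inner_smul_right, hv, hv]
  exact mul_lt_mul_of_pos_left ((hfK k hk).trans htp) (inv_pos.2 (norm_pos_iff.2 hv0))

theorem inner_eq_mul_add_mul (x y : V) : ⟪x, y⟫ = x 0 * y 0 + x 1 * y 1 := by
  simp [PiLp.inner_apply, Fin.sum_univ_two, mul_comm]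

theorem one_le_abs_add_abs_of_norm_eq_one {u : V} (hu : ‖u‖ = 1) : 1 ≤ |u 0| + |u 1| := by
  have h : u 0 * u 0 + u 1 * u 1 = 1 := by
    rw [← inner_eq_mul_add_mul, real_inner_self_eq_norm_sq, hu, one_pow]
  nlinarith [abs_nonneg (u 0), abs_nonneg (u 1), abs_mul_abs_self (u 0), abs_mul_abs_self (u 1),
    mul_nonneg (abs_nonneg (u 0)) (abs_nonneg (u 1))]

theorem exists_mem_rect_inner_ge {a b r : ℝ} {p u : V} (hr : 0 ≤ r)
    (hp : p ∈ rect (a - r) (b - r)) (hu : ‖u‖ = 1) :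
    ∃ c ∈ rect a b, ⟪p, u⟫ + r ≤ ⟪c, u⟫ := by
  set w : V := WithLp.toLp 2 fun i => (SignType.sign (u i) : ℝ)
  have hw : ∀ i, |w i| ≤ 1 := fun i => by
    rcases lt_trichotomy (u i) 0 with h | h | h <;> simp [w, h]
  have hshift : ∀ i, |(p + r • w) i| ≤ |p i| + r := fun i => by
    calc |(p + r • w) i| ≤ |p i| + r * |w i| := by
          simpa [abs_mul, abs_of_nonneg hr] using abs_add_le (p i) (r * w i)
      _ ≤ |p i| + r := by nlinarith [hw i]
  refine ⟨p + r • w, ⟨by linarith [hshift 0, hp.1], by linarith [hshift 1, hp.2]⟩, ?_⟩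
  have hwu : ⟪w, u⟫ = |u 0| + |u 1| := by
    simp [inner_eq_mul_add_mul, w, sign_mul_self]
  rw [inner_add_left, real_inner_smul_left, hwu]
  nlinarith [one_le_abs_add_abs_of_norm_eq_one hu]

section Width

variable {C : Set V} {u : V}

theorem inner_le_sSup_image (hC : IsCompact C) {c : V} (hc : c ∈ C) :
    ⟪c, u⟫ ≤ sSup ((fun p => ⟪p, u⟫) '' C) :=
  le_csSup (hC.bddAbove_image (by fun_prop)) (mem_image_of_mem _ hc)

theorem sInf_image_le_inner (hC : IsCompact C) {c : V} (hc : c ∈ C) :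
    sInf ((fun p => ⟪p, u⟫) '' C) ≤ ⟪c, u⟫ :=
  csInf_le (hC.bddBelow_image (by fun_prop)) (mem_image_of_mem _ hc)

theorem width_le_diam (hC : Bornology.IsBounded C) (hne : C.Nonempty) (hu : ‖u‖ = 1) :
    width u C ≤ Metric.diam C := by
  have hxy : ∀ x ∈ C, ∀ y ∈ C, ⟪x, u⟫ - ⟪y, u⟫ ≤ Metric.diam C := fun x hx y hy =>
    calc ⟪x, u⟫ - ⟪y, u⟫ = ⟪x - y, u⟫ := (inner_sub_left x y u).symm
      _ ≤ ‖x - y‖ * ‖u‖ := real_inner_le_norm _ _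
      _ ≤ Metric.diam C := by
          rw [hu, mul_one, ← dist_eq_norm]; exact Metric.dist_le_diam_of_mem hC hx hy
  suffices sSup ((fun p => ⟪p, u⟫) '' C) ≤ sInf ((fun p => ⟪p, u⟫) '' C) + Metric.diam C by
    unfold width; linarith
  refine csSup_le (hne.image _) ?_
  rintro _ ⟨x, hx, rfl⟩
  suffices ⟪x, u⟫ - Metric.diam C ≤ sInf ((fun p => ⟪p, u⟫) '' C) by linarith
  refine le_csInf (hne.image _) ?_
  rintro _ ⟨y, hy, rfl⟩
  linarith [hxy x hx y hy]

theorem width_pos (hC : IsCompact C) (hint : (interior C).Nonempty) (hu : ‖u‖ = 1) :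
    0 < width u C := by
  obtain ⟨x, hx⟩ := hint
  obtain ⟨r, hr, hball⟩ := Metric.mem_nhds_iff.1 (mem_interior_iff_mem_nhds.1 hx)
  have hmem : ∀ t : ℝ, |t| < r → x + t • u ∈ C := fun t ht => hball <| by
    simpa [dist_eq_norm, norm_smul, hu] using ht
  have hinner : ∀ t : ℝ, ⟪x + t • u, u⟫ = ⟪x, u⟫ + t := fun t => by
    rw [inner_add_left, real_inner_smul_left, real_inner_self_eq_norm_sq, hu]; ring
  have hsup := inner_le_sSup_image (u := u) hC
    (hmem (r / 2) (by rw [abs_of_pos (by positivity)]; linarith))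
  have hinf := sInf_image_le_inner (u := u) hC
    (hmem (-(r / 2)) (by rw [abs_neg, abs_of_pos (by positivity)]; linarith))
  rw [hinner] at hsup hinf
  unfold width; linarith

end Width

theorem IsKernel.nonempty {ε : ℝ} {K C : Set V} (hK : IsKernel ε K C) (hε : ε < 1)
    (hC : IsCompact C) (hint : (interior C).Nonempty) : K.Nonempty := by
  rw [nonempty_iff_ne_empty]
  rintro rfl
  have hu : ‖(EuclideanSpace.single 0 1 : V)‖ = 1 := by simp
  have hkernel := hK.2.2.2 _ hu
  have hpos := width_pos hC hint hu
  simp only [width, image_empty, Real.sSup_empty, Real.sInf_empty, sub_zero] at hkernel hpos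
  nlinarith

theorem kernel_contains_shrunk_rectangle_general
    (C K : Set V) (hC : IsConvexBody C) (a b d ε : ℝ)
    (hR : rect a b ⊆ C) (hd : Metric.diam C ≤ d)
    (hε : ε ∈ Set.Ioo (0:ℝ) 1) (hK : IsKernel ε K C) :
    rect (a - d * ε) (b - d * ε) ⊆ K := by
  intro p hp
  by_contra hpK
  have hKne := hK.nonempty hε.2 hC.1 hC.2.2
  obtain ⟨hKC, hKcpt, hKconv, hKwidth⟩ := hK
  have hdε : 0 ≤ d * ε := mul_nonneg (Metric.diam_nonneg.trans hd) hε.1.le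
  obtain ⟨u, hu, hsep⟩ := exists_unit_inner_lt_of_notMem hKconv hKcpt.isClosed hKne hpK
  obtain ⟨c, hcR, hpc⟩ := exists_mem_rect_inner_ge hdε hp hu
  have hsupK : sSup ((fun p => ⟪p, u⟫) '' K) < ⟪p, u⟫ :=
    (hKcpt.sSup_lt_iff_of_continuous hKne (by fun_prop) _).2 hsep
  have hsupC := inner_le_sSup_image (u := u) hC.1 (hR hcR)
  have hinf : sInf ((fun p => ⟪p, u⟫) '' C) ≤ sInf ((fun p => ⟪p, u⟫) '' K) :=
    csInf_le_csInf (hC.1.bddBelow_image (by fun_prop)) (hKne.image _) (image_mono hKC)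
  have hwidth : width u C ≤ d := (width_le_diam hC.1.isBounded ⟨c, hR hcR⟩ hu).trans hd
  have hkernel := hKwidth u hu
  unfold width at hwidth hkernel
  nlinarith [mul_le_mul_of_nonneg_left hwidth hε.1.le]

/-- a kernel of a body containing a rectangle contains a slightly
shrunk rectangle. -/
theorem kernel_contains_shrunk_rectangle
    (C K : Set V) (hC : IsConvexBody C) (a b d ε : ℝ)
    (hR : rect a b ⊆ C) (hd : Metric.diam C ≤ d)
    (hε : ε ∈ Set.Ioo (0:ℝ) 1) (hK : IsKernel ε K C)
    (ha : d * ε ≤ a) (hb : d * ε ≤ b) :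
    rect (a - d * ε) (b - d * ε) ⊆ K :=
  kernel_contains_shrunk_rectangle_general C K hC a b d ε hR hd hε hK
end
end

section
/- Let C be a convex body in the plane, let R_opt be a maximum-area rectangle contained in C, and let φ be an invertible affine transformation mapping R_opt onto the square [−1,1]². Then φ(C) is contained in the closed disk of radius 8 centered at the origin, and in particular the diameter of φ(C) is at most 16. -/
open scoped RealInnerProductSpace
noncomputable section

/-!
Let `q = φ p` for a point `p ∈ C`. The square `[-1,1]²` has a diagonal `ab` such that the
triangle `abq` has area `|q₀| + |q₁| ≥ ‖q‖`. Pulled back by `φ`, the triangle lies in `C`, since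
`a, b` come from the optimal rectangle and `C` is convex. Every triangle contains a rectangle of
half its area, so the triangle has at most twice the area of `R_opt`. Area ratios are affine
invariants, so `|q₀| + |q₁| ≤ 2 · area([-1,1]²) = 8`.
-/

open MeasureTheory
open scoped Pointwise

lemma addHaar_image_affineMap {E : Type*} [NormedAddCommGroup E] [NormedSpace ℝ E]
    [MeasurableSpace E] [BorelSpace E] [FiniteDimensional ℝ E] (μ : Measure E)
    [μ.IsAddHaarMeasure] (f : E →ᵃ[ℝ] E) (s : Set E) :
    μ (f '' s) = ENNReal.ofReal |LinearMap.det f.linear| * μ s := by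
  have : f '' s = f 0 +ᵥ f.linear '' s := by
    rw [← Set.image_vadd, Set.image_image]
    refine Set.image_congr fun z _ => ?_
    rw [vadd_eq_add, add_comm, ← vadd_eq_add, ← f.map_vadd, vadd_eq_add, add_zero]
  rw [this, measure_vadd, Measure.addHaar_image_linearMap]

lemma inner_sub_add_inner_sub {E : Type*} [NormedAddCommGroup E] [InnerProductSpace ℝ E]
    (a b c : E) : ⟪c - a, b - a⟫ + ⟪c - b, a - b⟫ = ‖b - a‖ ^ 2 := by
  rw [← neg_sub b a, inner_neg_right, ← sub_eq_add_neg, ← inner_sub_left,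
    sub_sub_sub_cancel_left, real_inner_self_eq_norm_sq]

lemma norm_le_abs_add_abs (q : V) : ‖q‖ ≤ |q 0| + |q 1| := by
  rw [EuclideanSpace.norm_eq, Fin.sum_univ_two, Real.sqrt_le_left (by positivity)]
  simp only [Real.norm_eq_abs, sq_abs]
  nlinarith [abs_nonneg (q 0), abs_nonneg (q 1), sq_abs (q 0), sq_abs (q 1)]

def det2 (a b : V) : ℝ := a 0 * b 1 - a 1 * b 0

lemma basisFun_det_eq_det2 (a b : V) :
    (EuclideanSpace.basisFun (Fin 2) ℝ).toBasis.det ![a, b] = det2 a b := by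
  rw [Module.Basis.det_apply, Matrix.det_fin_two]
  simp [Module.Basis.toMatrix_apply, det2, mul_comm]

lemma det2_map (L : V →ₗ[ℝ] V) (a b : V) :
    det2 (L a) (L b) = LinearMap.det L * det2 a b := by
  rw [← basisFun_det_eq_det2, ← basisFun_det_eq_det2, ← Module.Basis.det_comp]
  congr 1
  ext i : 1
  fin_cases i <;> rfl

lemma det2_sub_map (f : V →ᵃ[ℝ] V) (a b c : V) :
    det2 (f b - f a) (f c - f a) = LinearMap.det f.linear * det2 (b - a) (c - a) := by
  rw [← vsub_eq_sub, ← vsub_eq_sub, ← f.linearMap_vsub, ← f.linearMap_vsub, det2_map]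
  rfl

lemma det2_sub_rotate (a b c : V) : det2 (c - b) (a - b) = det2 (b - a) (c - a) := by
  simp only [det2, PiLp.sub_apply]
  ring

lemma Q_eq_vadd_parallelepiped (x u v : V) : Q x u v = x +ᵥ parallelepiped ![u, v] := by
  rw [parallelepiped_eq_convexHull, Q, ← convexHull_vadd]
  congr 1
  ext z
  simp only [Fin.sum_univ_two, Set.mem_vadd_set, Set.mem_add, Set.mem_insert_iff,
    Set.mem_singleton_iff, vadd_eq_add, Matrix.cons_val_zero, Matrix.cons_val_one]
  constructor
  · rintro (rfl | rfl | rfl | rfl)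
    exacts [⟨0, ⟨0, .inl rfl, 0, .inl rfl, by simp⟩, by simp⟩,
      ⟨u, ⟨u, .inr rfl, 0, .inl rfl, by simp⟩, rfl⟩,
      ⟨v, ⟨0, .inl rfl, v, .inr rfl, by simp⟩, rfl⟩,
      ⟨u + v, ⟨u, .inr rfl, v, .inr rfl, rfl⟩, by simp [add_assoc]⟩]
  · rintro ⟨_, ⟨a, rfl | rfl, b, rfl | rfl, rfl⟩, rfl⟩ <;> simp [add_assoc]

lemma volume_Q (x u v : V) : volume (Q x u v) = ENNReal.ofReal |det2 u v| := by
  rw [Q_eq_vadd_parallelepiped, measure_vadd,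
    ← (EuclideanSpace.basisFun (Fin 2) ℝ).addHaar_eq_volume, Measure.addHaar_parallelepiped,
    basisFun_det_eq_det2]

lemma volume_rect_one_one : volume (rect 1 1) = 4 := by
  have : rect 1 1 = WithLp.ofLp ⁻¹' Set.Icc (-1) 1 := by
    ext p
    simp only [rect, abs_le, Set.mem_ofPred_eq, Set.mem_preimage, Set.mem_Icc, Pi.le_def,
      Pi.neg_apply, Pi.one_apply, Fin.forall_fin_two]
    tauto
  rw [this, (PiLp.volume_preserving_ofLp (Fin 2)).measure_preimage
    measurableSet_Icc.nullMeasurableSet, Real.volume_Icc_pi]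
  norm_num

lemma abs_sign_le_one (r : ℝ) : |(SignType.sign r : ℝ)| ≤ 1 := by
  rcases lt_trichotomy r 0 with h | rfl | h <;> simp [*]

lemma exists_mem_rect_one_det2_eq (q : V) :
    ∃ a ∈ rect 1 1, ∃ b ∈ rect 1 1, det2 (b - a) (q - a) = 2 * (|q 0| + |q 1|) := by
  set w : V := !₂[SignType.sign (q 1), -SignType.sign (q 0)]
  have hw : w ∈ rect 1 1 := by
    simpa [w, rect] using ⟨abs_sign_le_one (q 1), abs_sign_le_one (q 0)⟩
  refine ⟨-w, by simpa [rect] using hw, w, hw, ?_⟩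
  simp only [det2, w, sub_neg_eq_add, PiLp.add_apply, Matrix.cons_val_zero,
    Matrix.cons_val_one, Matrix.cons_val_fin_one]
  rw [← sign_mul_self (q 0), ← sign_mul_self (q 1)]
  ring

lemma exists_rectangle_subset_of_inner_nonneg {S : Set V} (hS : Convex ℝ S) {a b c : V}
    (ha : a ∈ S) (hb : b ∈ S) (hc : c ∈ S) (hacute_a : 0 ≤ ⟪c - a, b - a⟫)
    (hacute_b : 0 ≤ ⟪c - b, a - b⟫) :
    ∃ x' u' v', ⟪u', v'⟫ = 0 ∧ Q x' u' v' ⊆ S ∧ det2 (b - a) (c - a) = 4 * det2 u' v' := by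
  set d := b - a
  set t := ⟪c - a, d⟫ / ‖d‖ ^ 2
  have ht0 : 0 ≤ t := by positivity
  have ht1 : t ≤ 1 :=
    div_le_one_of_le₀ (by linarith [inner_sub_add_inner_sub a b c]) (by positivity)
  have htd : t * ‖d‖ ^ 2 = ⟪c - a, d⟫ := div_mul_cancel_of_imp fun h => by
    simp [show d = 0 by simpa using h]
  -- the rectangle on the side `ab` with half the height of `c`: its top corners are the
  -- midpoints of `ac` and `bc`
  refine ⟨a + (t / 2) • d, (1 / 2 : ℝ) • d, (1 / 2 : ℝ) • (c - a) - (t / 2) • d, ?_, ?_, ?_⟩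
  · rw [inner_sub_right, real_inner_smul_left, real_inner_smul_left, real_inner_smul_right,
      real_inner_smul_right, real_inner_self_eq_norm_sq, real_inner_comm, ← htd]
    ring
  · refine convexHull_min ?_ hS
    simp only [Set.insert_subset_iff, Set.singleton_subset_iff]
    refine ⟨hS.segment_subset ha hb
        ⟨1 - t / 2, t / 2, by linarith, by linarith, by ring, by module⟩,
      hS.segment_subset ha hb
        ⟨1 - (t + 1) / 2, (t + 1) / 2, by linarith, by linarith, by ring, by module⟩,
      hS.segment_subset ha hc ⟨1 / 2, 1 / 2, by norm_num, by norm_num, by ring, by module⟩,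
      hS.segment_subset hb hc ⟨1 / 2, 1 / 2, by norm_num, by norm_num, by ring, by module⟩⟩
  · simp only [det2, PiLp.sub_apply, PiLp.smul_apply, smul_eq_mul, d]
    ring

lemma exists_rectangle_subset_of_triangle {S : Set V} (hS : Convex ℝ S) {a b c : V}
    (ha : a ∈ S) (hb : b ∈ S) (hc : c ∈ S) :
    ∃ x' u' v', ⟪u', v'⟫ = 0 ∧ Q x' u' v' ⊆ S ∧ det2 (b - a) (c - a) = 4 * det2 u' v' := by
  -- two angles of a triangle cannot both be obtuse
  have hα := inner_sub_add_inner_sub a b c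
  have hβ := inner_sub_add_inner_sub b c a
  have hγ := inner_sub_add_inner_sub c a b
  rcases le_or_gt 0 ⟪c - a, b - a⟫ with hA | hA
  · rcases le_or_gt 0 ⟪c - b, a - b⟫ with hB | hB
    · exact exists_rectangle_subset_of_inner_nonneg hS ha hb hc hA hB
    · rw [det2_sub_rotate c a b]
      refine exists_rectangle_subset_of_inner_nonneg hS hc ha hb ?_ (by rwa [real_inner_comm])
      linarith [real_inner_comm (b - c) (a - c), real_inner_comm (c - b) (a - b),
        sq_nonneg ‖c - b‖]
  · rw [← det2_sub_rotate a b c]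
    refine exists_rectangle_subset_of_inner_nonneg hS hb hc ha ?_ ?_
    · linarith [real_inner_comm (a - b) (c - b), sq_nonneg ‖b - a‖]
    · linarith [real_inner_comm (b - a) (c - a), real_inner_comm (b - c) (a - c),
        sq_nonneg ‖a - c‖]

lemma abs_det2_le_of_volume_le {C : Set V} (hC : Convex ℝ C) {x u v : V}
    (hopt : ∀ x' u' v' : V, ⟪u', v'⟫ = 0 → Q x' u' v' ⊆ C →
      volume (Q x' u' v') ≤ volume (Q x u v))
    {a b c : V} (ha : a ∈ C) (hb : b ∈ C) (hc : c ∈ C) :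
    |det2 (b - a) (c - a)| ≤ 4 * |det2 u v| := by
  obtain ⟨x', u', v', horth, hsub, hdet⟩ := exists_rectangle_subset_of_triangle hC ha hb hc
  have hvol := hopt x' u' v' horth hsub
  rw [volume_Q, volume_Q, ENNReal.ofReal_le_ofReal_iff (abs_nonneg _)] at hvol
  rw [hdet, abs_mul, abs_of_pos four_pos]
  gcongr

theorem image_of_body_in_disk_general (C : Set V) (hC : IsConvexBody C)
    (x u v : V) (hRC : Q x u v ⊆ C)
    (hopt : ∀ x' u' v' : V, ⟪u', v'⟫ = 0 → Q x' u' v' ⊆ C →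
      MeasureTheory.volume (Q x' u' v') ≤ MeasureTheory.volume (Q x u v))
    (φ : V ≃ᵃ[ℝ] V) (hφ : φ '' Q x u v = rect 1 1) :
    φ '' C ⊆ Metric.closedBall (0 : V) 8 ∧ Metric.diam (φ '' C) ≤ 16 := by
  set B : V →ᵃ[ℝ] V := φ.symm.toAffineMap
  have hQ : B '' rect 1 1 = Q x u v := by rw [← hφ]; exact φ.symm_image_image _
  have hB : 0 < |LinearMap.det B.linear| := abs_pos.2 φ.symm.linear.isUnit_det'.ne_zero
  have hdetQ : |det2 u v| = 4 * |LinearMap.det B.linear| := by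
    have h := volume_Q x u v
    rw [← hQ, addHaar_image_affineMap, volume_rect_one_one, ← ENNReal.ofReal_ofNat 4,
      ← ENNReal.ofReal_mul (abs_nonneg _)] at h
    rw [ENNReal.ofReal_eq_ofReal_iff (by positivity) (by positivity)] at h
    linarith
  have hball : φ '' C ⊆ Metric.closedBall 0 8 := by
    rintro _ ⟨p, hp, rfl⟩
    obtain ⟨a, ha, b, hb, hab⟩ := exists_mem_rect_one_det2_eq (φ p)
    have hmem : ∀ z ∈ rect 1 1, B z ∈ C := fun z hz => hRC (hQ ▸ Set.mem_image_of_mem B hz)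
    have htri := abs_det2_le_of_volume_le hC.2.1 hopt (hmem a ha) (hmem b hb)
      (show B (φ p) ∈ C by simpa [B] using hp)
    rw [det2_sub_map, hab, hdetQ, abs_mul, abs_of_nonneg (by positivity : (0:ℝ) ≤ 2 * _)] at htri
    rw [mem_closedBall_zero_iff]
    refine (norm_le_abs_add_abs _).trans ?_
    nlinarith
  refine ⟨hball, (Metric.diam_mono hball Metric.isBounded_closedBall).trans ?_⟩
  linarith [Metric.diam_closedBall (x := (0 : V)) (show (0:ℝ) ≤ 8 by norm_num)]

/-- after an affine map sending a maximum-area inscribed rectangle to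
`[-1,1]²`, the body lies in the disk of radius 8 and has diameter at most 16. -/
theorem image_of_body_in_disk (C : Set V) (hC : IsConvexBody C)
    (x u v : V) (huv : ⟪u, v⟫ = 0) (hRC : Q x u v ⊆ C)
    (hopt : ∀ x' u' v' : V, ⟪u', v'⟫ = 0 → Q x' u' v' ⊆ C →
      MeasureTheory.volume (Q x' u' v') ≤ MeasureTheory.volume (Q x u v))
    (φ : V ≃ᵃ[ℝ] V) (hφ : φ '' Q x u v = rect 1 1) :
    φ '' C ⊆ Metric.closedBall (0 : V) 8 ∧ Metric.diam (φ '' C) ≤ 16 :=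
  image_of_body_in_disk_general C hC x u v hRC hopt φ hφ
end
end
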